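/- Let φ = ∃X₁∀X₂ · p(X₁,X₂) be a quantified Boolean formula where p(X₁,X₂) = θ₁ ∨ … ∨ θ_n is in disjunctive normal form over the disjoint variable sets X₁ and X₂, and let P_φ be the clausal program consisting of the rules (x ← not ¬x) and (¬x ← not x) for every x ∈ X₁, the fact rules (¬θ_t ∨ sat ←) for every 1 ≤ t ≤ n, where ¬θ_t is the clause obtained by negating every literal of the conjunction θ_t and sat is a fresh atom, and the constraint rule (← not sat). Then φ is valid if and only if P_φ has a consistent answer set. -/
import Mathlib


open Classical

namespace PASP

/-- An interpretation assigns a truth value to each atom. -/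
abbrev Interp (A : Type) := A → Bool

/-- A literal is an atom with a sign (`true` = positive, `false` = classical negation). -/
abbrev Lit (A : Type) := A × Bool

/-- A possibility distribution on interpretations. -/
abbrev PossDist (A : Type) := Interp A → ℝ

variable {A : Type}

def litSat (ω : Interp A) (l : Lit A) : Prop := ω l.1 = l.2

def IsPossDist (π : PossDist A) : Prop := ∀ ω, 0 ≤ π ω ∧ π ω ≤ 1

noncomputable def poss (π : PossDist A) (p : Interp A → Prop) : ℝ :=
  sSup {x | ∃ ω, p ω ∧ π ω = x}

noncomputable def nec (π : PossDist A) (p : Interp A → Prop) : ℝ :=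
  1 - poss π fun ω => ¬ p ω

noncomputable def necLit (π : PossDist A) (l : Lit A) : ℝ :=
  nec π fun ω => litSat ω l

def Consistent (M : Set (Lit A)) : Prop :=
  ∀ a : A, ¬ ((a, true) ∈ M ∧ (a, false) ∈ M)

def MinSpecific (S : Set (PossDist A)) (π : PossDist A) : Prop :=
  π ∈ S ∧ ∀ π' ∈ S, π ≤ π' → π' = π


/-- A clause is a finite disjunction of literals; the empty clause is `⊥`. -/
abbrev Clause (A : Type) := Finset (Lit A)

/-- Satisfaction of a clause by an interpretation (the empty clause is unsatisfiable,
i.e. it stands for `⊥`). -/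
def clauseSat (ω : Interp A) (e : Clause A) : Prop := ∃ l ∈ e, litSat ω l

/-- The necessity of a clause; for the empty clause this is `N(⊥) = 1 − Π(⊤)`. -/
noncomputable def necCl (π : PossDist A) (e : Clause A) : ℝ :=
  nec π fun ω => clauseSat ω e

/-- The classical negation of a literal. -/
def litNeg (l : Lit A) : Lit A := (l.1, !l.2)

/-- A clausal rule `e₀ ← e₁,…,e_m, not e_{m+1},…, not e_n` (all weights are 1);
the empty head clause stands for `⊥` (a constraint rule). -/
structure ClausalRule (A : Type) where
  head : Clause A
  pos : Finset (Clause A)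
  neg : Finset (Clause A)

/-- `min(N(e₁),…,N(e_m))`, the minimum of the empty list being 1. -/
noncomputable def minBodyCl (π : PossDist A) (B : Finset (Clause A)) : ℝ :=
  sInf (insert 1 (necCl π '' (↑B : Set (Clause A))))

/-- `min(1 − N_V(e_{m+1}),…,1 − N_V(e_n))`, the empty minimum being 1. -/
noncomputable def minNegCl (πV : PossDist A) (B : Finset (Clause A)) : ℝ :=
  sInf (insert 1 ((fun e => 1 - necCl πV e) '' (↑B : Set (Clause A))))

/-- The weak constraint
`N(e₀) ≥ min(N(e₁),…,N(e_m), 1−N_V(e_{m+1}),…,1−N_V(e_n))` of a clausal rule. -/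
def weakConstraintNaf (π πV : PossDist A) (r : ClausalRule A) : Prop :=
  min (minBodyCl π r.pos) (minNegCl πV r.neg) ≤ necCl π r.head

/-- The possibility distributions satisfying the weak constraints of `P` given `πV`. -/
def weakModelsNaf (P : Set (ClausalRule A)) (πV : PossDist A) : Set (PossDist A) :=
  {π | IsPossDist π ∧ ∀ r ∈ P, weakConstraintNaf π πV r}

/-- A consistent (crisp) answer set of a clausal program: a non-vacuous two-valued
possibility distribution `π` with `π ∈ S^w_(P,π)`. -/
def HasConsistentAnswerSet (P : Set (ClausalRule A)) : Prop :=
  ∃ π : PossDist A, IsPossDist π ∧ MinSpecific (weakModelsNaf P π) π ∧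
    (∀ ω, π ω = 0 ∨ π ω = 1) ∧ ¬ (∀ ω, π ω = 0)

/-- The clausal program `P_φ` associated to the QBF `∃X₁∀X₂ · θ₁ ∨ … ∨ θ_n`:
the choice rules `(x ← not ¬x)` and `(¬x ← not x)` for `x ∈ X₁`, the facts
`(¬θ_t ∨ sat ←)`, and the constraint rule `(← not sat)`. -/
def qbfProgram {A : Type} [DecidableEq A] (X₁ : Finset A) (sat : A)
    (Θ : Finset (Finset (Lit A))) : Set (ClausalRule A) :=
  {r | ∃ x ∈ X₁, r = ⟨{(x, true)}, ∅, {({(x, false)} : Clause A)}⟩ ∨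
                 r = ⟨{(x, false)}, ∅, {({(x, true)} : Clause A)}⟩}
  ∪ {r | ∃ θ ∈ Θ, r = ⟨insert (sat, true) (θ.image litNeg), ∅, ∅⟩}
  ∪ {⟨(∅ : Clause A), ∅, {({(sat, true)} : Clause A)}⟩}

section Aux
variable {A : Type}

lemma bddAbove_possSet {π : PossDist A} (hπ : IsPossDist π) (p : Interp A → Prop) :
    BddAbove {x | ∃ ω, p ω ∧ π ω = x} := ⟨1, by rintro x ⟨ω, _, rfl⟩; exact (hπ ω).2⟩

lemma poss_nonneg {π : PossDist A} (hπ : IsPossDist π) (p : Interp A → Prop) :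
    0 ≤ poss π p := Real.sSup_nonneg (by rintro x ⟨ω, _, rfl⟩; exact (hπ ω).1)

lemma poss_le_one {π : PossDist A} (hπ : IsPossDist π) (p : Interp A → Prop) :
    poss π p ≤ 1 := Real.sSup_le (by rintro x ⟨ω, _, rfl⟩; exact (hπ ω).2) zero_le_one

lemma le_poss {π : PossDist A} (hπ : IsPossDist π) {p : Interp A → Prop} {ω : Interp A}
    (h : p ω) : π ω ≤ poss π p := le_csSup (bddAbove_possSet hπ p) ⟨ω, h, rfl⟩

lemma poss_eq_zero {π : PossDist A} (hπ : IsPossDist π) {p : Interp A → Prop}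
    (h : ∀ ω, p ω → π ω = 0) : poss π p = 0 :=
  le_antisymm (Real.sSup_le (by rintro x ⟨ω, hω, rfl⟩; exact (h ω hω).le) le_rfl)
    (poss_nonneg hπ p)

lemma poss_eq_one {π : PossDist A} (hπ : IsPossDist π) {p : Interp A → Prop}
    {ω : Interp A} (h : p ω) (h1 : π ω = 1) : poss π p = 1 :=
  le_antisymm (poss_le_one hπ p) (h1 ▸ le_poss hπ h)

lemma necCl_nonneg {π : PossDist A} (hπ : IsPossDist π) (e : Clause A) :
    0 ≤ necCl π e := by
  have := poss_le_one hπ (fun ω => ¬ clauseSat ω e)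
  simp only [necCl, nec]; linarith

lemma necCl_eq_one {π : PossDist A} (hπ : IsPossDist π) {e : Clause A}
    (h : ∀ ω, ¬ clauseSat ω e → π ω = 0) : necCl π e = 1 := by
  simp only [necCl, nec, poss_eq_zero hπ h]; ring

lemma necCl_eq_zero {π : PossDist A} (hπ : IsPossDist π) {e : Clause A}
    {ω : Interp A} (h : ¬ clauseSat ω e) (h1 : π ω = 1) : necCl π e = 0 := by
  have : poss π (fun ω => ¬ clauseSat ω e) = 1 := poss_eq_one hπ h h1
  simp only [necCl, nec, this]; ring

lemma eq_zero_of_one_le_necCl {π : PossDist A} (hπ : IsPossDist π) {e : Clause A}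
    (h : 1 ≤ necCl π e) {ω : Interp A} (hω : ¬ clauseSat ω e) : π ω = 0 := by
  have h2 : π ω ≤ poss π (fun ω => ¬ clauseSat ω e) := le_poss hπ hω
  have h3 : poss π (fun ω => ¬ clauseSat ω e) ≤ 0 := by
    simp only [necCl, nec] at h; linarith
  exact le_antisymm (h2.trans h3) (hπ ω).1

lemma minBodyCl_empty (π : PossDist A) : minBodyCl π ∅ = 1 := by
  simp [minBodyCl]

lemma minNegCl_singleton (π : PossDist A) (e : Clause A) :
    minNegCl π {e} = min 1 (1 - necCl π e) := by
  simp only [minNegCl, Finset.coe_singleton, Set.image_singleton]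
  rw [csInf_pair]

lemma wc_iff (ρ π : PossDist A) (h e : Clause A) :
    weakConstraintNaf ρ π ⟨h, ∅, {e}⟩ ↔ min 1 (1 - necCl π e) ≤ necCl ρ h := by
  simp [weakConstraintNaf, minBodyCl_empty, minNegCl_singleton]

lemma minNegCl_empty (π : PossDist A) : minNegCl π ∅ = 1 := by
  simp [minNegCl]

lemma wc_fact_iff (ρ π : PossDist A) (h : Clause A) :
    weakConstraintNaf ρ π ⟨h, ∅, ∅⟩ ↔ 1 ≤ necCl ρ h := by
  simp [weakConstraintNaf, minBodyCl_empty, minNegCl_empty]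

lemma clauseSat_singleton {ω : Interp A} {x : A} {b : Bool} :
    clauseSat ω ({(x, b)} : Clause A) ↔ ω x = b := by
  simp [clauseSat, litSat]

lemma not_clauseSat_empty (ω : Interp A) : ¬ clauseSat ω (∅ : Clause A) := by
  simp [clauseSat]

end Aux

section Aux2
variable {A : Type}

lemma choice_ok {π ρ : PossDist A} (hπ : IsPossDist π) (hρ : IsPossDist ρ) {x : A} {s : Bool}
    (hπs : ∀ ξ : Interp A, ξ x ≠ s → π ξ = 0) (hρs : ∀ ξ : Interp A, ξ x ≠ s → ρ ξ = 0)
    (b : Bool) :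
    weakConstraintNaf ρ π ⟨{(x, b)}, ∅, {({(x, !b)} : Clause A)}⟩ := by
  rw [wc_iff]
  by_cases hb : b = s
  · subst hb
    have h1 : necCl ρ ({(x, b)} : Clause A) = 1 :=
      necCl_eq_one hρ (fun ω hω => hρs ω (by simpa [clauseSat_singleton] using hω))
    rw [h1]; exact min_le_left _ _
  · have hnb : (!b) = s := by cases b <;> cases s <;> simp_all
    have h1 : necCl π ({(x, !b)} : Clause A) = 1 :=
      necCl_eq_one hπ (fun ω hω => hπs ω (by rw [← hnb]; simpa [clauseSat_singleton] using hω))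
    rw [h1]
    have h2 := necCl_nonneg hρ ({(x, b)} : Clause A)
    have h3 : min 1 (1 - (1:ℝ)) ≤ 0 := by norm_num
    linarith [h3.trans h2]

lemma choice_out {π ρ : PossDist A} (hπ : IsPossDist π) (hρ : IsPossDist ρ) {x : A} {b : Bool}
    (hw : weakConstraintNaf ρ π ⟨{(x, b)}, ∅, {({(x, !b)} : Clause A)}⟩)
    {ω₀ : Interp A} (h0 : π ω₀ = 1) (hx : ω₀ x = b) :
    ∀ ξ : Interp A, ξ x ≠ b → ρ ξ = 0 := by
  rw [wc_iff] at hw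
  have hnec : necCl π ({(x, !b)} : Clause A) = 0 :=
    necCl_eq_zero hπ (by simp [clauseSat_singleton, hx]) h0
  rw [hnec] at hw
  norm_num at hw
  intro ξ hξ
  exact eq_zero_of_one_le_necCl hρ hw (by simpa [clauseSat_singleton] using hξ)

lemma fact_ok {ρ : PossDist A} (π : PossDist A) (hρ : IsPossDist ρ) {e : Clause A}
    (h : ∀ ξ, ¬ clauseSat ξ e → ρ ξ = 0) : weakConstraintNaf ρ π ⟨e, ∅, ∅⟩ := by
  rw [wc_fact_iff]; exact (necCl_eq_one hρ h).ge

lemma fact_out {ρ : PossDist A} (π : PossDist A) (hρ : IsPossDist ρ) {e : Clause A}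
    (hw : weakConstraintNaf ρ π ⟨e, ∅, ∅⟩) : ∀ ξ, ¬ clauseSat ξ e → ρ ξ = 0 := by
  rw [wc_fact_iff] at hw
  exact fun ξ hξ => eq_zero_of_one_le_necCl hρ hw hξ

lemma constraint_ok {π ρ : PossDist A} (hπ : IsPossDist π) (hρ : IsPossDist ρ) {sat : A}
    (h : ∀ ξ : Interp A, ξ sat = false → π ξ = 0) :
    weakConstraintNaf ρ π ⟨(∅ : Clause A), ∅, {({(sat, true)} : Clause A)}⟩ := by
  rw [wc_iff]
  have h1 : necCl π ({(sat, true)} : Clause A) = 1 :=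
    necCl_eq_one hπ (fun ω hω => h ω (by simpa [clauseSat_singleton] using hω))
  rw [h1]
  have h2 := necCl_nonneg hρ (∅ : Clause A)
  have h3 : min 1 (1 - (1:ℝ)) ≤ 0 := by norm_num
  linarith [h3.trans h2]

lemma constraint_out {π : PossDist A} (hπ : IsPossDist π) {sat : A}
    (hw : weakConstraintNaf π π ⟨(∅ : Clause A), ∅, {({(sat, true)} : Clause A)}⟩)
    {ω₀ : Interp A} (h0 : π ω₀ = 1) :
    ∀ ξ : Interp A, ξ sat = false → π ξ = 0 := by
  rw [wc_iff] at hw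
  have hne : necCl π (∅ : Clause A) = 0 := necCl_eq_zero hπ (not_clauseSat_empty ω₀) h0
  rw [hne] at hw
  have h1 : 1 ≤ necCl π ({(sat, true)} : Clause A) := by
    rcases min_le_iff.mp hw with h | h
    · linarith
    · linarith
  intro ξ hξ
  exact eq_zero_of_one_le_necCl hπ h1 (by simp [clauseSat_singleton, hξ])

variable [DecidableEq A]

lemma mem_choice {X₁ : Finset A} {sat : A} {Θ : Finset (Finset (Lit A))} {x : A}
    (hx : x ∈ X₁) (b : Bool) :
    (⟨{(x, b)}, ∅, {({(x, !b)} : Clause A)}⟩ : ClausalRule A) ∈ qbfProgram X₁ sat Θ := by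
  refine Or.inl (Or.inl ⟨x, hx, ?_⟩)
  cases b
  · exact Or.inr rfl
  · exact Or.inl rfl

lemma mem_fact {X₁ : Finset A} {sat : A} {Θ : Finset (Finset (Lit A))} {θ : Finset (Lit A)}
    (hθ : θ ∈ Θ) :
    (⟨insert (sat, true) (θ.image litNeg), ∅, ∅⟩ : ClausalRule A) ∈ qbfProgram X₁ sat Θ :=
  Or.inl (Or.inr ⟨θ, hθ, rfl⟩)

lemma mem_constraint {X₁ : Finset A} {sat : A} {Θ : Finset (Finset (Lit A))} :
    (⟨(∅ : Clause A), ∅, {({(sat, true)} : Clause A)}⟩ : ClausalRule A) ∈ qbfProgram X₁ sat Θ :=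
  Or.inr rfl

end Aux2

/-- the QBF `φ = ∃X₁∀X₂ · p(X₁,X₂)` with `p` in DNF (given by the
finite set `Θ` of conjunctions of literals over `X₁ ∪ X₂`) is valid iff the clausal
program `P_φ` has a consistent answer set. -/
theorem stmt13 {A : Type} [Fintype A] [DecidableEq A]
    (X₁ X₂ : Finset A) (sat : A) (hdisj : Disjoint X₁ X₂)
    (hsat₁ : sat ∉ X₁) (hsat₂ : sat ∉ X₂)
    (Θ : Finset (Finset (Lit A)))
    (hΘ : ∀ θ ∈ Θ, ∀ l ∈ θ, l.1 ∈ X₁ ∨ l.1 ∈ X₂) :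
    (∃ σ : A → Bool, ∀ ω : Interp A, (∀ x ∈ X₁, ω x = σ x) →
        ∃ θ ∈ Θ, ∀ l ∈ θ, litSat ω l) ↔
      HasConsistentAnswerSet (qbfProgram X₁ sat Θ) := by
  classical
  constructor
  · -- validity → answer set
    rintro ⟨σ, hσ⟩
    set π : PossDist A :=
      fun ω => if (∀ x ∈ X₁, ω x = σ x) ∧ ω sat = true then 1 else 0 with hπdef
    have hπ : IsPossDist π := by
      intro ω
      rw [hπdef]
      dsimp only
      split <;> norm_num
    have hzero : ∀ ω : Interp A, ¬ ((∀ x ∈ X₁, ω x = σ x) ∧ ω sat = true) → π ω = 0 := by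
      intro ω hc; rw [hπdef]; simp only [if_neg hc]
    -- canonical support element
    set ω₀ : Interp A := fun a => if a = sat then true else σ a with hω₀def
    have hω₀x : ∀ x ∈ X₁, ω₀ x = σ x := by
      intro x hx
      rw [hω₀def]; simp only [if_neg (fun h : x = sat => hsat₁ (h ▸ hx))]
    have hω₀sat : ω₀ sat = true := by rw [hω₀def]; simp
    have hω₀1 : π ω₀ = 1 := by
      have hQ0 : (∀ x ∈ X₁, ω₀ x = σ x) ∧ ω₀ sat = true := ⟨hω₀x, hω₀sat⟩
      rw [hπdef]; simp only [if_pos hQ0]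
    -- support of π agrees with σ on X₁
    have hπagree : ∀ x ∈ X₁, ∀ ξ : Interp A, ξ x ≠ σ x → π ξ = 0 := by
      intro x hx ξ hξ
      exact hzero ξ (fun h => hξ (h.1 x hx))
    have hπsat : ∀ ξ : Interp A, ξ sat = false → π ξ = 0 := by
      intro ξ hξ
      exact hzero ξ (fun h => by rw [h.2] at hξ; exact Bool.noConfusion hξ)
    -- π satisfies all the rules
    have hmodels : π ∈ weakModelsNaf (qbfProgram X₁ sat Θ) π := by
      refine ⟨hπ, ?_⟩
      rintro r hr
      rcases hr with (⟨x, hx, rfl | rfl⟩ | ⟨θ, hθ, rfl⟩) | rfl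
      · exact choice_ok hπ hπ (hπagree x hx) (hπagree x hx) true
      · exact choice_ok hπ hπ (hπagree x hx) (hπagree x hx) false
      · refine fact_ok π hπ ?_
        intro ξ hns
        refine hπsat ξ ?_
        cases hsξ : ξ sat
        · rfl
        · exact absurd ⟨(sat, true), Finset.mem_insert_self _ _, hsξ⟩ hns
      · exact constraint_ok hπ hπ hπsat
    refine ⟨π, hπ, ⟨hmodels, ?_⟩, ?_, ?_⟩
    · -- maximality
      intro π' hπ'mem hle
      obtain ⟨hπ'd, hπ'r⟩ := hπ'mem
      funext ξ
      by_cases hQ : (∀ x ∈ X₁, ξ x = σ x) ∧ ξ sat = true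
      · have h1 : π ξ = 1 := by rw [hπdef]; simp only [if_pos hQ]
        rw [h1]
        exact le_antisymm (hπ'd ξ).2 (h1 ▸ hle ξ)
      · have h0 : π ξ = 0 := hzero ξ hQ
        rw [h0]
        by_cases hagree : ∀ x ∈ X₁, ξ x = σ x
        · -- ξ agrees with σ but ξ sat = false : killed by a fact rule
          have hsatξ : ξ sat = false := by
            cases h : ξ sat
            · rfl
            · exact absurd ⟨hagree, h⟩ hQ
          obtain ⟨θ, hθ, hθsat⟩ := hσ ξ hagree
          refine fact_out π hπ'd (hπ'r _ (mem_fact hθ)) ξ ?_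
          rintro ⟨l, hl, hls⟩
          rcases Finset.mem_insert.mp hl with rfl | hl'
          · rw [litSat] at hls; rw [hls] at hsatξ; exact Bool.noConfusion hsatξ
          · obtain ⟨m, hm, rfl⟩ := Finset.mem_image.mp hl'
            have hms := hθsat m hm
            rw [litSat] at hls hms
            rw [litNeg] at hls
            rw [hms] at hls
            cases m.2 <;> simp at hls
        · -- ξ disagrees with σ at some x ∈ X₁ : killed by a choice rule
          push_neg at hagree
          obtain ⟨x, hx, hne⟩ := hagree
          exact choice_out hπ hπ'd (hπ'r _ (mem_choice hx (σ x))) hω₀1 (hω₀x x hx) ξ hne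
    · intro ω
      by_cases h : (∀ x ∈ X₁, ω x = σ x) ∧ ω sat = true
      · right; rw [hπdef]; simp only [if_pos h]
      · left; exact hzero ω h
    · intro h
      have h0 := h ω₀
      rw [hω₀1] at h0
      norm_num at h0
  · -- answer set → validity
    rintro ⟨π, hπ, ⟨⟨hπd, hrules⟩, hmax⟩, hcrisp, hnv⟩
    push_neg at hnv
    obtain ⟨ω₀, hω₀⟩ := hnv
    have hω₀1 : π ω₀ = 1 := (hcrisp ω₀).resolve_left hω₀
    have hsatsup : ∀ ξ : Interp A, ξ sat = false → π ξ = 0 :=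
      constraint_out hπ (hrules _ mem_constraint) hω₀1
    -- support agrees with ω₀ on X₁
    have hagreeW : ∀ x ∈ X₁, ∀ ξ : Interp A, ξ x ≠ ω₀ x → π ξ = 0 := by
      intro x hx ξ hne
      exact choice_out hπ hπ (hrules _ (mem_choice hx (ω₀ x))) hω₀1 rfl ξ hne
    refine ⟨fun a => ω₀ a, ?_⟩
    intro ω hagree
    by_contra hno
    push_neg at hno
    -- flip sat to false
    set ω' : Interp A := fun a => if a = sat then false else ω a with hω'def
    have hω'sat : ω' sat = false := by rw [hω'def]; simp
    have hω'eq : ∀ a : A, a ≠ sat → ω' a = ω a := by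
      intro a ha; rw [hω'def]; simp only [if_neg ha]
    have hω'agree : ∀ x ∈ X₁, ω' x ≠ ω₀ x → False := by
      intro x hx hne
      exact hne ((hω'eq x (fun h => hsat₁ (h ▸ hx))).trans (hagree x hx))
    have hω'θ : ∀ θ ∈ Θ, ∃ l ∈ θ, ¬ litSat ω' l := by
      intro θ hθ
      obtain ⟨l, hl, hns⟩ := hno θ hθ
      refine ⟨l, hl, ?_⟩
      have hlsat : l.1 ≠ sat := by
        rcases hΘ θ hθ l hl with h | h
        · exact fun hh => hsat₁ (hh ▸ h)
        · exact fun hh => hsat₂ (hh ▸ h)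
      rw [litSat, hω'eq l.1 hlsat]
      exact hns
    -- the strictly larger weak model
    set π' : PossDist A := fun ξ => if ξ = ω' then 1 else π ξ with hπ'def
    have hπ'ω' : π' ω' = 1 := by rw [hπ'def]; simp
    have hπ'd : IsPossDist π' := by
      intro ξ
      rw [hπ'def]
      by_cases h : ξ = ω'
      · simp [h]
      · simp only [if_neg h]; exact hπ ξ
    have hπ'eq : ∀ ξ : Interp A, ξ ≠ ω' → π' ξ = π ξ := by
      intro ξ h; rw [hπ'def]; simp only [if_neg h]
    have hπ'mem : π' ∈ weakModelsNaf (qbfProgram X₁ sat Θ) π := by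
      refine ⟨hπ'd, ?_⟩
      have hπ'agree : ∀ x ∈ X₁, ∀ ξ : Interp A, ξ x ≠ ω₀ x → π' ξ = 0 := by
        intro x hx ξ hne
        by_cases h : ξ = ω'
        · exact absurd (h ▸ hne) (fun hh => hω'agree x hx hh)
        · rw [hπ'eq ξ h]; exact hagreeW x hx ξ hne
      rintro r hr
      rcases hr with (⟨x, hx, rfl | rfl⟩ | ⟨θ, hθ, rfl⟩) | rfl
      · exact choice_ok hπ hπ'd (hagreeW x hx) (hπ'agree x hx) true
      · exact choice_ok hπ hπ'd (hagreeW x hx) (hπ'agree x hx) false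
      · refine fact_ok π hπ'd ?_
        intro ξ hns
        by_cases h : ξ = ω'
        · exfalso
          subst h
          obtain ⟨l, hl, hnl⟩ := hω'θ θ hθ
          refine hns ⟨litNeg l, Finset.mem_insert_of_mem (Finset.mem_image_of_mem _ hl), ?_⟩
          rw [litSat, litNeg]
          rw [litSat] at hnl
          cases hb : ω' l.1 <;> cases hc : l.2 <;> simp_all
        · rw [hπ'eq ξ h]
          refine hsatsup ξ ?_
          cases hsξ : ξ sat
          · rfl
          · exact absurd ⟨(sat, true), Finset.mem_insert_self _ _, hsξ⟩ hns
      · exact constraint_ok hπ hπ'd hsatsup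
    have hle : π ≤ π' := by
      intro ξ
      by_cases h : ξ = ω'
      · subst h; rw [hπ'ω']; exact (hπ ω').2
      · rw [hπ'eq ξ h]
    have heq := hmax π' hπ'mem hle
    have h1 : π ω' = 0 := hsatsup ω' hω'sat
    have h2 := congrFun heq ω'
    rw [hπ'ω', h1] at h2
    norm_num at h2

end PASP
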